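/- Time to win: if p̄_{nΛμ} > 0 and n > (2 p_Δ / p̄_{nΛμ})² · d_μ, where d_μ = ln(1/w_μ), then p̄_{nΛξ} > 0; that is, once n exceeds this threshold, the universal scheme Λ_ξ has strictly positive expected average profit. -/

import Mathlib

open Finset Filter

/-- A probability distribution on finite binary strings:
nonnegative, `1` on the empty string, and additive under one-symbol extension. -/
def IsDistr (ρ : List Bool → ℝ) : Prop :=
  (∀ x, 0 ≤ ρ x) ∧ ρ [] = 1 ∧
    ∀ x, ρ x = ρ (x ++ [false]) + ρ (x ++ [true])

/-- Conditional probability `ρ(b | x) = ρ(xb)/ρ(x)` (junk `0` when `ρ x = 0`). -/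
noncomputable def condP (ρ : List Bool → ℝ) (x : List Bool) (b : Bool) : ℝ :=
  ρ (x ++ [b]) / ρ x

/-- Instantaneous relative entropy
`h_t(x) = ∑_b μ(b|x) ln (μ(b|x)/ξ(b|x))` (conventions `0·ln 0 = 0` are automatic
since `Real.log 0 = 0` and `r/0 = 0`). -/
noncomputable def instEnt (μ ξ : List Bool → ℝ) (x : List Bool) : ℝ :=
  ∑ b : Bool, condP μ x b * Real.log (condP μ x b / condP ξ x b)

/-- Total relative entropy `H_n = ∑_{t=1}^n ∑_{x_{<t}} μ(x_{<t}) h_t(x_{<t})`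
(histories of length `t-1`, i.e. length `t ∈ {0,…,n-1}`). -/
noncomputable def totalEnt (μ ξ : List Bool → ℝ) (n : ℕ) : ℝ :=
  ∑ t ∈ Finset.range n, ∑ x : Fin t → Bool,
    μ (List.ofFn x) * instEnt μ ξ (List.ofFn x)

/-- `ρ`-expected loss of predicting `y` after history `x`. -/
noncomputable def expLoss (ρ : List Bool → ℝ) (l : Bool → Bool → ℝ)
    (x : List Bool) (y : Bool) : ℝ :=
  ∑ b : Bool, condP ρ x b * l b y

/-- `Y` is a fixed choice of minimizers for the scheme `Λ_ρ`. -/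
def IsPredictor (ρ : List Bool → ℝ) (l : Bool → Bool → ℝ)
    (Y : List Bool → Bool) : Prop :=
  ∀ x y, expLoss ρ l x (Y x) ≤ expLoss ρ l x y

/-- Total `μ`-expected loss `L_{nΛ}` of the scheme with minimizers `Y`. -/
noncomputable def totalLoss (μ : List Bool → ℝ) (l : Bool → Bool → ℝ)
    (Y : List Bool → Bool) (n : ℕ) : ℝ :=
  ∑ t ∈ Finset.range n, ∑ x : Fin t → Bool,
    μ (List.ofFn x) * expLoss μ l (List.ofFn x) (Y (List.ofFn x))

/-- `ρ`-expected profit of action `y` after history `x` (the history also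
encodes the round `t` via its length). -/
noncomputable def expProfit (ρ : List Bool → ℝ) (p : List Bool → Bool → Bool → ℝ)
    (x : List Bool) (y : Bool) : ℝ :=
  ∑ b : Bool, condP ρ x b * p x b y

/-- `Y` is a fixed choice of maximizers of the `ρ`-expected profit (the scheme `Λ_ρ`). -/
def IsGambler (ρ : List Bool → ℝ) (p : List Bool → Bool → Bool → ℝ)
    (Y : List Bool → Bool) : Prop :=
  ∀ x y, expProfit ρ p x y ≤ expProfit ρ p x (Y x)

/-- Total `μ`-expected profit `P_{nΛ}` over the first `n` rounds. -/
noncomputable def totalProfit (μ : List Bool → ℝ) (p : List Bool → Bool → Bool → ℝ)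
    (Y : List Bool → Bool) (n : ℕ) : ℝ :=
  ∑ t ∈ Finset.range n, ∑ x : Fin t → Bool,
    μ (List.ofFn x) * expProfit μ p (List.ofFn x) (Y (List.ofFn x))

/-- Average `μ`-expected profit per round, `p̄_{nΛ} = P_{nΛ}/n`. -/
noncomputable def avgProfit (μ : List Bool → ℝ) (p : List Bool → Bool → Bool → ℝ)
    (Y : List Bool → Bool) (n : ℕ) : ℝ :=
  totalProfit μ p Y n / n


/-! Since `ξ ≥ w_μ μ`, the relative entropy of `μ` to `ξ` on strings of length `n` is at most
`d_μ = ln (1/w_μ)`; by the chain rule it is the sum over the rounds of the expected instantaneous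
relative entropies `h_t`. Pinsker's inequality bounds the squared `ℓ¹` distance `a_t` between the
next-symbol predictions of `μ` and `ξ` by `4 h_t`, and since `Λ_ξ` is optimal for `ξ`, under `μ` it
loses at most `p_Δ a_t` per round against any other action. Cauchy–Schwarz over the `n` rounds gives
`P_{nΛμ} - P_{nΛξ} ≤ 2 p_Δ √(n d_μ)`, which is below `n p̄_{nΛμ}` exactly beyond the threshold. -/

open Real

lemma two_mul_sub_two_mul_sqrt_mul_le_mul_log_div {p q : ℝ} (hp : 0 ≤ p) (hq : 0 ≤ q)
    (hpq : 0 < p → 0 < q) : 2 * p - 2 * (√p * √q) ≤ p * log (p / q) := by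
  rcases hp.eq_or_lt with rfl | hp
  · simp
  have hs : 0 < √p := sqrt_pos.2 hp
  have hu : 0 < √q := sqrt_pos.2 (hpq hp)
  have hlog : log (p / q) = 2 * log (√p / √q) := by
    rw [show p / q = (√p / √q) ^ 2 by rw [div_pow, sq_sqrt hp.le, sq_sqrt hq], log_pow]
    push_cast; ring
  have hlog_ge := one_sub_inv_le_log_of_pos (div_pos hs hu)
  rw [inv_div] at hlog_ge
  calc 2 * p - 2 * (√p * √q) = 2 * p * (1 - √q / √p) := by
        field_simp
        linear_combination (-√q) * mul_self_sqrt hp.le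
    _ ≤ p * log (p / q) := by rw [hlog]; nlinarith

/-- Pinsker's inequality (with constant `4` instead of `2`), via the Hellinger distance. -/
lemma sq_sum_abs_sub_le_four_mul_sum_mul_log_div {α : Type*} [Fintype α] {P Q : α → ℝ}
    (hP : ∀ a, 0 ≤ P a) (hQ : ∀ a, 0 ≤ Q a) (hP1 : ∑ a, P a = 1) (hQ1 : ∑ a, Q a = 1)
    (hPQ : ∀ a, 0 < P a → 0 < Q a) :
    (∑ a, |P a - Q a|) ^ 2 ≤ 4 * ∑ a, P a * log (P a / Q a) := by
  set X := ∑ a, √(P a) * √(Q a)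
  have hminus : ∑ a, (√(P a) - √(Q a)) ^ 2 = 2 - 2 * X := by
    simp only [sub_sq, sq_sqrt (hP _), sq_sqrt (hQ _), sum_add_distrib, sum_sub_distrib, hP1, hQ1,
      mul_assoc, ← mul_sum]
    ring
  have hplus : ∑ a, (√(P a) + √(Q a)) ^ 2 = 2 + 2 * X := by
    simp only [add_sq, sq_sqrt (hP _), sq_sqrt (hQ _), sum_add_distrib, hP1, hQ1,
      mul_assoc, ← mul_sum]
    ring
  have hX : X ≤ 1 := by
    have := sum_nonneg fun a (_ : a ∈ univ) => sq_nonneg (√(P a) - √(Q a))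
    linarith
  have hhell : 2 - 2 * X ≤ ∑ a, P a * log (P a / Q a) := by
    calc 2 - 2 * X = ∑ a, (2 * P a - 2 * (√(P a) * √(Q a))) := by
          rw [sum_sub_distrib, ← mul_sum, ← mul_sum, hP1]; ring
      _ ≤ _ := sum_le_sum fun a _ =>
          two_mul_sub_two_mul_sqrt_mul_le_mul_log_div (hP a) (hQ a) (hPQ a)
  have hfactor : ∀ a, |P a - Q a| = |√(P a) - √(Q a)| * (√(P a) + √(Q a)) := fun a => by
    rw [← abs_of_nonneg (by positivity : 0 ≤ √(P a) + √(Q a)), ← abs_mul]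
    congr 1
    linear_combination mul_self_sqrt (hQ a) - mul_self_sqrt (hP a)
  calc (∑ a, |P a - Q a|) ^ 2
        ≤ (∑ a, |√(P a) - √(Q a)| ^ 2) * ∑ a, (√(P a) + √(Q a)) ^ 2 := by
          simp only [hfactor]; exact sum_mul_sq_le_sq_mul_sq _ _ _
    _ = (2 - 2 * X) * (2 + 2 * X) := by simp only [sq_abs, hminus, hplus]
    _ ≤ 4 * ∑ a, P a * log (P a / Q a) := by nlinarith

lemma abs_sum_mul_sub_sum_mul_le {α : Type*} [Fintype α] {P Q f : α → ℝ} {m Δ : ℝ}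
    (hPQ : ∑ a, P a = ∑ a, Q a) (hf : ∀ a, f a ∈ Set.Icc (m - Δ) m) :
    |∑ a, P a * f a - ∑ a, Q a * f a| ≤ Δ / 2 * ∑ a, |P a - Q a| := by
  -- centre `f` at the midpoint of its range, which the equal masses of `P` and `Q` do not see
  have hcentre : ∑ a, P a * f a - ∑ a, Q a * f a
      = ∑ a, (P a - Q a) * (f a - (m - Δ / 2)) := by
    simp only [sub_mul, mul_sub, sum_sub_distrib, ← sum_mul, hPQ]
    ring
  rw [hcentre, mul_sum]
  refine (abs_sum_le_sum_abs _ _).trans (sum_le_sum fun a _ => ?_)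
  rw [abs_mul, mul_comm]
  gcongr
  exact abs_le.2 ⟨by linarith [(hf a).1], by linarith [(hf a).2]⟩

lemma mul_sqrt_lt_of_sq_div_mul_lt {a b d n : ℝ} (ha : 0 < a) (hn : 0 < n)
    (h : (b / a) ^ 2 * d < n) : b * √(n * d) < n * a := by
  have hbd : b ^ 2 * d < n * a ^ 2 := by
    rwa [div_pow, div_mul_eq_mul_div, div_lt_iff₀ (by positivity)] at h
  calc b * √(n * d) ≤ |b| * √(n * d) := by gcongr; exact le_abs_self b
    _ = √(b ^ 2 * (n * d)) := by rw [sqrt_mul (sq_nonneg b), sqrt_sq_eq_abs]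
    _ < n * a := (sqrt_lt' (by positivity)).2 (by nlinarith)

lemma sum_ofFn_succ_eq_sum_append (t : ℕ) (g : List Bool → ℝ) :
    ∑ x : Fin (t + 1) → Bool, g (List.ofFn x)
      = ∑ x : Fin t → Bool, ∑ b : Bool, g (List.ofFn x ++ [b]) := by
  rw [← (Fin.snocEquiv fun _ => Bool).sum_comp, Fintype.sum_prod_type, Finset.sum_comm]
  simp only [Fin.snocEquiv, Equiv.coe_fn_mk, List.ofFn_succ', Fin.snoc_castSucc, Fin.snoc_last,
    List.concat_eq_append]

namespace IsDistr

variable {ρ : List Bool → ℝ}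

lemma nonneg (hρ : IsDistr ρ) (x : List Bool) : 0 ≤ ρ x := hρ.1 x

lemma sum_append (hρ : IsDistr ρ) (x : List Bool) : ∑ b : Bool, ρ (x ++ [b]) = ρ x := by
  rw [Fintype.sum_bool, hρ.2.2 x, add_comm]

lemma append_eq_zero (hρ : IsDistr ρ) {x : List Bool} (hx : ρ x = 0) (b : Bool) :
    ρ (x ++ [b]) = 0 := by
  have := hρ.2.2 x
  have := hρ.nonneg (x ++ [false])
  have := hρ.nonneg (x ++ [true])
  cases b <;> linarith

lemma sum_ofFn_eq_one (hρ : IsDistr ρ) (t : ℕ) : ∑ x : Fin t → Bool, ρ (List.ofFn x) = 1 := by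
  induction t with
  | zero => simp [hρ.2.1]
  | succ t ih => simp only [sum_ofFn_succ_eq_sum_append, hρ.sum_append, ih]

lemma condP_nonneg (hρ : IsDistr ρ) (x : List Bool) (b : Bool) : 0 ≤ condP ρ x b :=
  div_nonneg (hρ.nonneg _) (hρ.nonneg _)

lemma sum_condP (hρ : IsDistr ρ) {x : List Bool} (hx : 0 < ρ x) : ∑ b, condP ρ x b = 1 := by
  simp only [condP, ← sum_div, hρ.sum_append, div_self hx.ne']

lemma of_hasSum {ι : Type*} {μs : ι → List Bool → ℝ} {w : ι → ℝ} (hμs : ∀ i, IsDistr (μs i))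
    (hw : ∀ i, 0 ≤ w i) (hw1 : HasSum w 1) (hρ : ∀ x, HasSum (fun i => w i * μs i x) (ρ x)) :
    IsDistr ρ := by
  refine ⟨fun x => ?_, ?_, fun x => ?_⟩
  · exact hasSum_le (fun i => mul_nonneg (hw i) ((hμs i).nonneg x)) hasSum_zero (hρ x)
  · refine (hρ []).unique ?_
    simpa only [(hμs _).2.1, mul_one] using hw1
  · refine (hρ x).unique ?_
    simpa only [(hμs _).2.2 x, mul_add] using (hρ (x ++ [false])).add (hρ (x ++ [true]))

end IsDistr

lemma mul_le_of_hasSum {ι : Type*} {μs : ι → List Bool → ℝ} {w : ι → ℝ} {ρ : List Bool → ℝ}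
    (hμs : ∀ i, IsDistr (μs i)) (hw : ∀ i, 0 ≤ w i)
    (hρ : ∀ x, HasSum (fun i => w i * μs i x) (ρ x)) (i : ι) (x : List Bool) :
    w i * μs i x ≤ ρ x :=
  le_hasSum (hρ x) i fun j _ => mul_nonneg (hw j) ((hμs j).nonneg x)

/-- `∑_{t=1}^n E_μ[f(x_{<t})]`. -/
noncomputable def cumExpect (μ : List Bool → ℝ) (n : ℕ) (f : List Bool → ℝ) : ℝ :=
  ∑ t ∈ range n, ∑ x : Fin t → Bool, μ (List.ofFn x) * f (List.ofFn x)

lemma totalEnt_eq_cumExpect (μ ξ : List Bool → ℝ) (n : ℕ) :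
    totalEnt μ ξ n = cumExpect μ n (instEnt μ ξ) := rfl

lemma totalProfit_eq_cumExpect (μ : List Bool → ℝ) (p : List Bool → Bool → Bool → ℝ)
    (Y : List Bool → Bool) (n : ℕ) :
    totalProfit μ p Y n = cumExpect μ n (fun x => expProfit μ p x (Y x)) := rfl

section cumExpect

variable {μ : List Bool → ℝ} {n : ℕ}

lemma cumExpect_sub (f g : List Bool → ℝ) :
    cumExpect μ n f - cumExpect μ n g = cumExpect μ n (fun x => f x - g x) := by
  simp only [cumExpect, mul_sub, sum_sub_distrib]

lemma cumExpect_const_mul (c : ℝ) (f : List Bool → ℝ) :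
    cumExpect μ n (fun x => c * f x) = c * cumExpect μ n f := by
  simp only [cumExpect, mul_sum, mul_left_comm]

lemma cumExpect_mono (hμ : IsDistr μ) {f g : List Bool → ℝ} (hfg : ∀ x, 0 < μ x → f x ≤ g x) :
    cumExpect μ n f ≤ cumExpect μ n g := by
  refine sum_le_sum fun t _ => sum_le_sum fun x _ => ?_
  rcases (hμ.nonneg (List.ofFn x)).eq_or_lt with h | h
  · simp [← h]
  · exact mul_le_mul_of_nonneg_left (hfg _ h) h.le

lemma cumExpect_sq_le (hμ : IsDistr μ) (f : List Bool → ℝ) :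
    cumExpect μ n f ^ 2 ≤ n * cumExpect μ n (fun x => f x ^ 2) := by
  have hCS := sum_sq_le_sum_mul_sum_of_sq_le_mul ((range n).sigma fun t => univ)
    (r := fun z : Σ t, Fin t → Bool => μ (List.ofFn z.2) * f (List.ofFn z.2))
    (fun z _ => hμ.nonneg (List.ofFn z.2))
    (fun z _ => mul_nonneg (hμ.nonneg _) (sq_nonneg (f _))) (fun z _ => by ring_nf; rfl)
  simp only [sum_sigma, hμ.sum_ofFn_eq_one, sum_const, card_range, nsmul_eq_mul, mul_one] at hCS
  exact hCS

end cumExpect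

section Entropy

variable {μ ξ : List Bool → ℝ}

/-- The chain rule for relative entropy, one symbol at a time. -/
lemma mul_instEnt_eq_sub (hμ : IsDistr μ) (hdom : ∀ x, 0 < μ x → 0 < ξ x) (x : List Bool) :
    μ x * instEnt μ ξ x
      = ∑ b : Bool, μ (x ++ [b]) * log (μ (x ++ [b]) / ξ (x ++ [b]))
        - μ x * log (μ x / ξ x) := by
  rcases (hμ.nonneg x).eq_or_lt with h0 | hx
  · simp [← h0, hμ.append_eq_zero h0.symm]
  have hsplit : ∀ b : Bool, μ x * (condP μ x b * log (condP μ x b / condP ξ x b))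
      = μ (x ++ [b]) * log (μ (x ++ [b]) / ξ (x ++ [b]))
        - μ (x ++ [b]) * log (μ x / ξ x) := fun b => by
    rcases (hμ.nonneg (x ++ [b])).eq_or_lt with hb0 | hb
    · simp [condP, ← hb0]
    have hξx := hdom x hx
    have hξb := hdom _ hb
    have hratio : condP μ x b / condP ξ x b = (μ (x ++ [b]) / ξ (x ++ [b])) / (μ x / ξ x) := by
      simp only [condP]; field_simp
    rw [hratio, log_div (by positivity) (by positivity), condP]
    field_simp
  rw [instEnt, mul_sum, sum_congr rfl fun b _ => hsplit b, sum_sub_distrib, ← sum_mul,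
    hμ.sum_append]

lemma totalEnt_eq_sub (hμ : IsDistr μ) (hdom : ∀ x, 0 < μ x → 0 < ξ x) (n : ℕ) :
    totalEnt μ ξ n
      = ∑ x : Fin n → Bool, μ (List.ofFn x) * log (μ (List.ofFn x) / ξ (List.ofFn x))
        - μ [] * log (μ [] / ξ []) := by
  let F : ℕ → ℝ := fun t => ∑ x : Fin t → Bool,
    μ (List.ofFn x) * log (μ (List.ofFn x) / ξ (List.ofFn x))
  have hstep : ∀ t, ∑ x : Fin t → Bool, μ (List.ofFn x) * instEnt μ ξ (List.ofFn x)
      = F (t + 1) - F t := fun t => by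
    simp only [F, sum_ofFn_succ_eq_sum_append t fun z => μ z * log (μ z / ξ z),
      ← sum_sub_distrib, mul_instEnt_eq_sub hμ hdom]
  rw [totalEnt, sum_congr rfl fun t _ => hstep t, sum_range_sub F n]
  simp [F]

lemma totalEnt_le_log_one_div (hμ : IsDistr μ) (hξ : ξ [] = 1) {c : ℝ} (hc : 0 < c)
    (hdom : ∀ x, c * μ x ≤ ξ x) (n : ℕ) : totalEnt μ ξ n ≤ log (1 / c) := by
  have hpos : ∀ x, 0 < μ x → 0 < ξ x := fun x hx => (mul_pos hc hx).trans_le (hdom x)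
  rw [totalEnt_eq_sub hμ hpos, hμ.2.1, hξ, div_one, log_one, mul_zero, sub_zero]
  calc ∑ x : Fin n → Bool, μ (List.ofFn x) * log (μ (List.ofFn x) / ξ (List.ofFn x))
      ≤ ∑ x : Fin n → Bool, μ (List.ofFn x) * log (1 / c) := sum_le_sum fun x _ => by
        rcases (hμ.nonneg (List.ofFn x)).eq_or_lt with h0 | hx
        · simp [← h0]
        refine mul_le_mul_of_nonneg_left (log_le_log (div_pos hx (hpos _ hx)) ?_) hx.le
        rw [div_le_div_iff₀ (hpos _ hx) hc]
        linarith [hdom (List.ofFn x)]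
    _ = log (1 / c) := by rw [← sum_mul, hμ.sum_ofFn_eq_one, one_mul]

end Entropy

noncomputable def condL1Dist (μ ξ : List Bool → ℝ) (x : List Bool) : ℝ :=
  ∑ b : Bool, |condP μ x b - condP ξ x b|

section Profit

variable {μ ξ : List Bool → ℝ}

lemma sq_condL1Dist_le (hμ : IsDistr μ) (hξ : IsDistr ξ) (hdom : ∀ x, 0 < μ x → 0 < ξ x)
    {x : List Bool} (hx : 0 < μ x) : condL1Dist μ ξ x ^ 2 ≤ 4 * instEnt μ ξ x := by
  refine sq_sum_abs_sub_le_four_mul_sum_mul_log_div (hμ.condP_nonneg x) (hξ.condP_nonneg x)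
    (hμ.sum_condP hx) (hξ.sum_condP (hdom x hx)) fun b hb => ?_
  exact div_pos (hdom _ ((div_pos_iff_of_pos_right hx).1 hb)) (hdom x hx)

lemma expProfit_sub_expProfit_le (hμ : IsDistr μ) (hξ : IsDistr ξ)
    {p : List Bool → Bool → Bool → ℝ} {pmax pΔ : ℝ}
    (hp : ∀ x a y, p x a y ∈ Set.Icc (pmax - pΔ) pmax) {Y : List Bool → Bool}
    (hY : IsGambler ξ p Y) {x : List Bool} (hx : 0 < μ x) (hξx : 0 < ξ x) (y : Bool) :
    expProfit μ p x y - expProfit μ p x (Y x) ≤ pΔ * condL1Dist μ ξ x := by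
  have hclose : ∀ y, |expProfit μ p x y - expProfit ξ p x y| ≤ pΔ / 2 * condL1Dist μ ξ x :=
    fun y => abs_sum_mul_sub_sum_mul_le (by rw [hμ.sum_condP hx, hξ.sum_condP hξx])
      fun b => hp x b y
  have h₁ := abs_le.1 (hclose y)
  have h₂ := abs_le.1 (hclose (Y x))
  linarith [hY x y]

lemma totalProfit_sub_le_two_mul_sqrt (hμ : IsDistr μ) (hξ : IsDistr ξ) {c : ℝ} (hc : 0 < c)
    (hdom : ∀ x, c * μ x ≤ ξ x) {p : List Bool → Bool → Bool → ℝ} {pmax pΔ : ℝ}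
    (hp : ∀ x a y, p x a y ∈ Set.Icc (pmax - pΔ) pmax) {Yξ : List Bool → Bool}
    (hYξ : IsGambler ξ p Yξ) (Y : List Bool → Bool) (n : ℕ) :
    totalProfit μ p Y n - totalProfit μ p Yξ n ≤ 2 * pΔ * √(n * log (1 / c)) := by
  have hpΔ : 0 ≤ pΔ := by linarith [(hp [] false false).1, (hp [] false false).2]
  have hc1 : c ≤ 1 := by simpa [hμ.2.1, hξ.2.1] using hdom []
  have hpos : ∀ x, 0 < μ x → 0 < ξ x := fun x hx => (mul_pos hc hx).trans_le (hdom x)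
  set D := cumExpect μ n (condL1Dist μ ξ)
  have hregret : totalProfit μ p Y n - totalProfit μ p Yξ n ≤ pΔ * D := by
    rw [totalProfit_eq_cumExpect, totalProfit_eq_cumExpect, cumExpect_sub,
      ← cumExpect_const_mul]
    exact cumExpect_mono hμ fun x hx => expProfit_sub_expProfit_le hμ hξ hp hYξ hx (hpos x hx) _
  have hD : D ^ 2 ≤ n * (4 * log (1 / c)) :=
    calc D ^ 2 ≤ n * cumExpect μ n (fun x => condL1Dist μ ξ x ^ 2) := cumExpect_sq_le hμ _
      _ ≤ n * cumExpect μ n (fun x => 4 * instEnt μ ξ x) := by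
          gcongr
          exact cumExpect_mono hμ fun x hx => sq_condL1Dist_le hμ hξ hpos hx
      _ = n * (4 * totalEnt μ ξ n) := by rw [cumExpect_const_mul, totalEnt_eq_cumExpect]
      _ ≤ n * (4 * log (1 / c)) := by
          gcongr
          exact totalEnt_le_log_one_div hμ hξ.2.1 hc hdom n
  have hsqrt : √(n * (4 * log (1 / c))) = 2 * √(n * log (1 / c)) := by
    rw [mul_left_comm, sqrt_mul (by norm_num), show (4 : ℝ) = 2 ^ 2 by norm_num,
      sqrt_sq (by norm_num)]
  calc _ ≤ pΔ * D := hregret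
    _ ≤ pΔ * (2 * √(n * log (1 / c))) := by
        gcongr
        exact hsqrt ▸ le_sqrt_of_sq_le hD
    _ = 2 * pΔ * √(n * log (1 / c)) := by ring

end Profit

theorem time_to_win_general {ι : Type*}
    (μs : ι → List Bool → ℝ) (w : ι → ℝ)
    (hμs : ∀ i, IsDistr (μs i)) (hw : ∀ i, 0 < w i) (hw1 : HasSum w 1)
    (ξ : List Bool → ℝ) (hξ : ∀ x, HasSum (fun i => w i * μs i x) (ξ x))
    (i₀ : ι)
    (p : List Bool → Bool → Bool → ℝ) (pmax pΔ : ℝ)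
    (hp : ∀ x a y, p x a y ∈ Set.Icc (pmax - pΔ) pmax)
    (Yμ Yξ : List Bool → Bool)
    (hYξ : IsGambler ξ p Yξ)
    (n : ℕ)
    (hpos : 0 < avgProfit (μs i₀) p Yμ n)
    (hn : (2 * pΔ / avgProfit (μs i₀) p Yμ n) ^ 2 * Real.log (1 / w i₀) < n) :
    0 < avgProfit (μs i₀) p Yξ n := by
  have hn0 : (0 : ℝ) < n :=
    Nat.cast_pos.2 (Nat.pos_of_ne_zero fun h => by simp [h, avgProfit] at hpos)
  have hregret := totalProfit_sub_le_two_mul_sqrt (hμs i₀)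
    (IsDistr.of_hasSum hμs (fun i => (hw i).le) hw1 hξ) (hw i₀)
    (mul_le_of_hasSum hμs (fun i => (hw i).le) hξ i₀) hp hYξ Yμ n
  have hwin := mul_sqrt_lt_of_sq_div_mul_lt hpos hn0 hn
  rw [avgProfit, mul_div_cancel₀ _ hn0.ne'] at hwin
  exact div_pos (by linarith) hn0

/-- Theorem 4(ii), time to win: with profits in
`[p_max − p_Δ, p_max]` and `d_μ = ln (1/w_μ)`, if `p̄_{nΛμ} > 0` and
`n > (2 p_Δ / p̄_{nΛμ})² · d_μ`, then `p̄_{nΛξ} > 0`. -/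
theorem time_to_win {ι : Type*} [Countable ι]
    (μs : ι → List Bool → ℝ) (w : ι → ℝ)
    (hμs : ∀ i, IsDistr (μs i)) (hw : ∀ i, 0 < w i) (hw1 : HasSum w 1)
    (ξ : List Bool → ℝ) (hξ : ∀ x, HasSum (fun i => w i * μs i x) (ξ x))
    (i₀ : ι)
    (p : List Bool → Bool → Bool → ℝ) (pmax pΔ : ℝ) (hpΔ : 0 < pΔ)
    (hp : ∀ x a y, p x a y ∈ Set.Icc (pmax - pΔ) pmax)
    (Yμ Yξ : List Bool → Bool)
    (hYμ : IsGambler (μs i₀) p Yμ) (hYξ : IsGambler ξ p Yξ)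
    (n : ℕ)
    (hpos : 0 < avgProfit (μs i₀) p Yμ n)
    (hn : (2 * pΔ / avgProfit (μs i₀) p Yμ n) ^ 2 * Real.log (1 / w i₀) < n) :
    0 < avgProfit (μs i₀) p Yξ n :=
  time_to_win_general μs w hμs hw hw1 ξ hξ i₀ p pmax pΔ hp Yμ Yξ hYξ n hpos hn
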